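/- For coprime integers a, c with c > 0, the Dedekind sum satisfies the bound |s(a,c)| ≤ (c-1)(c-2)/(12c) = s(1,c); in particular |s(a,c)| < c/12. -/

import Mathlib

/-!
By Cauchy–Schwarz, `s(a,c)² ≤ (∑ ((k/c))²) (∑ ((ak/c))²)`. Since `k ↦ ak` permutes the residues
mod `c` and `((x))` has period 1, both factors equal `s(1,c) = ∑_{k=1}^{c-1} (k/c - 1/2)²`, which
evaluates to `(c-1)(c-2)/(12c) < c/12`.
-/

/-- The sawtooth function `((x))`. -/
noncomputable def saw (x : ℝ) : ℝ :=
  open Classical in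
  if ∃ n : ℤ, (n : ℝ) = x then 0 else x - ⌊x⌋ - 1/2

/-- The Dedekind sum `s(a,c) = ∑_{k=1}^{c-1} ((k/c))((ak/c))`. -/
noncomputable def dsum (a c : ℤ) : ℝ :=
  ∑ k ∈ Finset.Ico 1 c.toNat, saw ((k : ℝ) / c) * saw ((a : ℝ) * k / c)

open Finset Function

theorem Function.Periodic.map_emod {M : Type*} {f : ℤ → M} {n : ℤ} (hf : Periodic f n) (x : ℤ) :
    f (x % n) = f x := by
  rw [Int.emod_def, mul_comm]
  simpa using hf.sub_int_mul_eq (x / n)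

theorem Function.Periodic.sum_range_comp_mul {M : Type*} [AddCommMonoid M] {f : ℤ → M} {n : ℕ}
    (hf : Periodic f n) {a : ℤ} (ha : IsCoprime a n) :
    ∑ k ∈ range n, f (a * k) = ∑ k ∈ range n, f k := by
  obtain ⟨u, v, huv⟩ := ha
  rcases n.eq_zero_or_pos with rfl | hn
  · simp
  have hn' : (0 : ℤ) < n := by exact_mod_cast hn
  have mem : ∀ x : ℤ, (x % n).toNat ∈ range n := fun x => by
    have := Int.emod_lt_of_pos x hn'
    simp only [mem_range]; omega
  have cast_toNat : ∀ x : ℤ, ((x % n).toNat : ℤ) = x % n := fun x =>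
    Int.toNat_of_nonneg (Int.emod_nonneg x hn'.ne')
  have inv : ∀ {p q : ℤ}, p * q ≡ 1 [ZMOD n] →
      ∀ k ∈ range n, (p * (q * k % n).toNat % n).toNat = k := by
    intro p q hpq k hk
    have hk' : (k : ℤ) < n := by simpa using hk
    have : p * (q * k % n).toNat ≡ k [ZMOD n] := calc
      p * (q * k % n).toNat ≡ p * (q * k) [ZMOD n] := by
        rw [cast_toNat]; exact (Int.mod_modEq _ _).mul_left p
      _ = (p * q) * k := by ring
      _ ≡ 1 * k [ZMOD n] := hpq.mul_right _
      _ = k := one_mul _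
    rw [this, Int.emod_eq_of_lt (by positivity) hk', Int.toNat_natCast]
  have hua : u * a ≡ 1 [ZMOD n] := Int.modEq_iff_dvd.mpr ⟨v, by linear_combination -huv⟩
  have hau : a * u ≡ 1 [ZMOD n] := by rwa [mul_comm]
  refine sum_nbij' (fun k => (a * k % n).toNat) (fun k => (u * k % n).toNat)
    (fun _ _ => mem _) (fun _ _ => mem _) (inv hua) (inv hau) fun k _ => ?_
  rw [cast_toNat, hf.map_emod]

theorem saw_add_intCast (x : ℝ) (m : ℤ) : saw (x + m) = saw x := by
  have hint : (∃ k : ℤ, (k : ℝ) = x + m) ↔ ∃ k : ℤ, (k : ℝ) = x :=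
    ⟨fun ⟨k, hk⟩ => ⟨k - m, by push_cast; linarith⟩,
      fun ⟨k, hk⟩ => ⟨k + m, by push_cast; linarith⟩⟩
  unfold saw
  split_ifs <;> simp_all [Int.floor_add_intCast]

theorem saw_periodic : Periodic saw 1 := by
  simpa using fun x => saw_add_intCast x 1

theorem saw_zero : saw 0 = 0 := by
  simp [saw]

theorem saw_of_mem_Ioo {x : ℝ} (hx : x ∈ Set.Ioo 0 1) : saw x = x - 1 / 2 := by
  have hfloor : ⌊x⌋ = 0 := Int.floor_eq_zero_iff.mpr ⟨hx.1.le, hx.2⟩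
  have hnot : ¬∃ k : ℤ, (k : ℝ) = x := by
    rintro ⟨k, rfl⟩
    rw [Int.floor_intCast] at hfloor
    simp [hfloor] at hx
  simp [saw, hnot, hfloor]

theorem sum_range_div_sub_half_sq (x : ℝ) (m : ℕ) :
    ∑ k ∈ range m, ((k : ℝ) / x - 1 / 2) ^ 2
      = m * (m - 1) * (2 * m - 1) / (6 * x ^ 2) - m * (m - 1) / (2 * x) + m / 4 := by
  induction m with
  | zero => simp
  | succ m ih =>
    rw [sum_range_succ, ih]
    push_cast
    ring

theorem sum_saw_div_sq (n : ℕ) :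
    ∑ k ∈ Ico 1 n, saw ((k : ℝ) / n) ^ 2 = ((n : ℝ) - 1) * ((n : ℝ) - 2) / (12 * n) := by
  rcases n.eq_zero_or_pos with rfl | hn
  · simp
  have hsaw : ∀ k ∈ Ico 1 n, saw ((k : ℝ) / n) = k / n - 1 / 2 := fun k hk => by
    have hk := mem_Ico.mp hk
    apply saw_of_mem_Ioo
    constructor
    · exact div_pos (by exact_mod_cast hk.1) (by positivity)
    · rw [div_lt_one (by positivity)]; exact_mod_cast hk.2
  rw [sum_congr rfl fun k hk => by rw [hsaw k hk], sum_Ico_eq_sub _ hn, sum_range_div_sub_half_sq,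
    sum_range_div_sub_half_sq]
  field_simp
  ring

theorem sum_saw_mul_div_sq {a : ℤ} {n : ℕ} (ha : IsCoprime a n) :
    ∑ k ∈ Ico 1 n, saw (a * k / n) ^ 2 = ∑ k ∈ Ico 1 n, saw ((k : ℝ) / n) ^ 2 := by
  rcases n.eq_zero_or_pos with rfl | hn
  · simp
  have hper : Periodic (fun k : ℤ => saw (k / n) ^ 2) n := fun k => by
    simp only [Int.cast_add, Int.cast_natCast, add_div, div_self (by positivity : (n : ℝ) ≠ 0)]
    rw [saw_periodic]
  have := hper.sum_range_comp_mul ha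
  simp only [Int.cast_mul, Int.cast_natCast] at this
  rw [range_eq_Ico, sum_eq_sum_Ico_succ_bot hn, sum_eq_sum_Ico_succ_bot hn] at this
  simpa [saw_zero] using this

theorem dsum_natCast (a : ℤ) (n : ℕ) :
    dsum a n = ∑ k ∈ Ico 1 n, saw ((k : ℝ) / n) * saw (a * k / n) := by
  simp [dsum]

theorem dsum_one_natCast_eq_sum_sq (n : ℕ) : dsum 1 n = ∑ k ∈ Ico 1 n, saw ((k : ℝ) / n) ^ 2 := by
  simp only [dsum_natCast, Int.cast_one, one_mul, ← sq]

theorem dsum_one_natCast (n : ℕ) : dsum 1 n = ((n : ℝ) - 1) * ((n : ℝ) - 2) / (12 * n) := by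
  rw [dsum_one_natCast_eq_sum_sq, sum_saw_div_sq]

theorem abs_dsum_le_dsum_one {a : ℤ} {n : ℕ} (ha : IsCoprime a n) : |dsum a n| ≤ dsum 1 n := by
  have hS := dsum_one_natCast_eq_sum_sq n
  apply abs_le_of_sq_le_sq _ (hS ▸ sum_nonneg fun _ _ => sq_nonneg _)
  calc dsum a n ^ 2
      ≤ (∑ k ∈ Ico 1 n, saw ((k : ℝ) / n) ^ 2) * ∑ k ∈ Ico 1 n, saw (a * k / n) ^ 2 := by
        rw [dsum_natCast]; exact sum_mul_sq_le_sq_mul_sq _ _ _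
    _ = dsum 1 n ^ 2 := by rw [sum_saw_mul_div_sq ha, hS, sq]

theorem dsum_bound (a c : ℤ) (hc : 0 < c) (h : IsCoprime a c) :
    |dsum a c| ≤ ((c : ℝ) - 1) * ((c : ℝ) - 2) / (12 * c) ∧
    ((c : ℝ) - 1) * ((c : ℝ) - 2) / (12 * c) = dsum 1 c ∧
    |dsum a c| < (c : ℝ) / 12 := by
  lift c to ℕ using hc.le
  have hc' : (1 : ℝ) ≤ c := by exact_mod_cast hc
  simp only [Int.cast_natCast]
  rw [← dsum_one_natCast]
  refine ⟨abs_dsum_le_dsum_one h, rfl, (abs_dsum_le_dsum_one h).trans_lt ?_⟩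
  rw [dsum_one_natCast, div_lt_div_iff₀ (by positivity) (by norm_num)]
  nlinarith
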